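/- arXiv:1306.3882 — 6 statements merged into one kernel-verified Lean document; each statement's English description precedes it below -/
import Mathlib

section
/- Let (V,E) be a finite directed graph with distinguished vertices I, F ∈ V. There exists a covering path from I to F if and only if: (1) every vertex of V is reachable from I, (2) F is reachable from every vertex of V, and (3) for all pairs of vertices v1, v2 ∈ V \ {I,F}, either v2 is reachable from v1 or v1 is reachable from v2. -/
/-!
Necessity: along a walk every vertex reaches every later one, so `I` reaches all vertices, all
vertices reach `F`, and any two vertices are comparable. Sufficiency: by (1) and (2) a vertex equal
to `I` or `F` is comparable with every vertex, so with (3) reachability is a total preorder on all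
of `V`. Sorting the finitely many vertices along it, putting `I` in front and `F` at the end, and
replacing each consecutive pair by a walk between them yields the covering path.
-/

open Relation

namespace List

variable {α : Type*}

theorem Pairwise.rel_or_rel_of_mem {R : α → α → Prop} {l : List α} (hl : l.Pairwise R)
    (refl : ∀ a, R a a) {a b : α} (ha : a ∈ l) (hb : b ∈ l) : R a b ∨ R b a :=
  hl.imp Or.inl |>.forall_of_forall_of_flip (fun x _ => .inl (refl x)) (hl.imp Or.inr) ha hb

variable {r : α → α → Prop}

theorem IsChain.pairwise_reflTransGen {l : List α} (hl : l.IsChain r) :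
    l.Pairwise (ReflTransGen r) :=
  isChain_iff_pairwise.1 (hl.imp fun _ _ => .single)

theorem exists_pairwise_forall_mem [Finite α] (total : ∀ a b, r a b ∨ r b a)
    (trans : ∀ {a b c}, r a b → r b c → r a c) :
    ∃ l : List α, l.Pairwise r ∧ ∀ a, a ∈ l := by
  classical
  have := Fintype.ofFinite α
  have : Std.Total r := ⟨total⟩
  have : IsTrans α r := ⟨fun _ _ _ => trans⟩
  exact ⟨Finset.univ.toList.insertionSort r, pairwise_insertionSort r _, by simp⟩

-- Not `l ⊆ w`: a step from `a` to `b = a` may be refined by the empty walk.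
theorem IsChain.exists_isChain_cons_of_reflTransGen :
    ∀ {a : α} {l : List α}, (a :: l).IsChain (ReflTransGen r) →
      ∃ w, (a :: w).IsChain r ∧ (a :: w).getLast? = (a :: l).getLast? ∧ a :: l ⊆ a :: w
  | a, [], _ => ⟨[], .singleton a, rfl, Subset.refl _⟩
  | a, b :: l, hl => by
    obtain ⟨hab, hbl⟩ := isChain_cons_cons.1 hl
    obtain ⟨s, hs, hsb⟩ := exists_isChain_cons_of_relationReflTransGen hab
    obtain ⟨w, hw, hwl, hlw⟩ := exists_isChain_cons_of_reflTransGen hbl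
    have hb : b ∈ a :: s := hsb ▸ getLast_mem _
    refine ⟨s ++ w, ?_, ?_, ?_⟩
    · rw [← cons_append, isChain_append]
      refine ⟨hs, hw.tail, fun x hx y hy => ?_⟩
      rw [getLast?_eq_some_getLast (cons_ne_nil a s), hsb, Option.mem_some_iff] at hx
      exact hx ▸ hw.rel_head? hy
    · rw [getLast?_cons_cons, ← hwl, ← cons_append, getLast?_append,
        getLast?_eq_some_getLast (cons_ne_nil a s), hsb, getLast?_cons]
      cases w.getLast? <;> rfl
    · intro x hx
      rcases mem_cons.1 hx with rfl | hx
      · exact mem_cons_self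
      rcases mem_cons.1 (hlw hx) with rfl | hx
      · exact cons_subset_cons a (subset_append_left s w) hb
      · exact mem_cons_of_mem a (mem_append_right s hx)

end List

theorem Relation.reflTransGen_total_of_source_of_sink {V : Type*} {E : V → V → Prop} {I F : V}
    (hI : ∀ v, ReflTransGen E I v) (hF : ∀ v, ReflTransGen E v F)
    (hcomp : ∀ v1 v2 : V, v1 ≠ I → v1 ≠ F → v2 ≠ I → v2 ≠ F →
      ReflTransGen E v1 v2 ∨ ReflTransGen E v2 v1)
    (a b : V) : ReflTransGen E a b ∨ ReflTransGen E b a := by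
  rcases eq_or_ne a I with rfl | haI
  · exact .inl (hI b)
  rcases eq_or_ne a F with rfl | haF
  · exact .inr (hF b)
  rcases eq_or_ne b I with rfl | hbI
  · exact .inr (hI a)
  rcases eq_or_ne b F with rfl | hbF
  · exact .inl (hF a)
  exact hcomp a b haI haF hbI hbF

/-- Lemma 1 (Existence of a covering path):
In a finite directed graph `(V, E)` with distinguished vertices `I, F`, a covering
path from `I` to `F` (a walk starting at `I`, ending at `F`, visiting every vertex
at least once) exists iff every vertex is reachable from `I`, `F` is reachable from
every vertex, and any two vertices outside `{I, F}` are reachable one from the other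
in at least one direction. -/
theorem covering_path_exists_iff {V : Type*} [Fintype V] (E : V → V → Prop) (I F : V) :
    (∃ p : List V, p.Chain' E ∧ p.head? = some I ∧ p.getLast? = some F ∧ ∀ v : V, v ∈ p) ↔
    ((∀ v : V, Relation.ReflTransGen E I v) ∧
     (∀ v : V, Relation.ReflTransGen E v F) ∧
     (∀ v1 v2 : V, v1 ≠ I → v1 ≠ F → v2 ≠ I → v2 ≠ F →
        Relation.ReflTransGen E v1 v2 ∨ Relation.ReflTransGen E v2 v1)) := by
  constructor
  · rintro ⟨p, hp, hpI, hpF, hcover⟩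
    have hpair := hp.pairwise_reflTransGen
    refine ⟨fun v => ?_, fun v => ?_, fun v1 v2 _ _ _ _ =>
      hpair.rel_or_rel_of_mem (fun _ => .refl) (hcover v1) (hcover v2)⟩
    · obtain ⟨t, rfl⟩ := List.head?_eq_some_iff.1 hpI
      rcases List.mem_cons.1 (hcover v) with rfl | hv
      · exact .refl
      · exact List.rel_of_pairwise_cons hpair hv
    · obtain ⟨s, rfl⟩ := List.getLast?_eq_some_iff.1 hpF
      rcases List.mem_append.1 (hcover v) with hv | hv
      · exact (List.pairwise_append.1 hpair).2.2 v hv F (List.mem_singleton_self F)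
      · exact List.mem_singleton.1 hv ▸ .refl
  · rintro ⟨hI, hF, hcomp⟩
    obtain ⟨l, hl, hcover⟩ := List.exists_pairwise_forall_mem
      (reflTransGen_total_of_source_of_sink hI hF hcomp) ReflTransGen.trans
    have hchain : (I :: (l ++ [F])).IsChain (ReflTransGen E) :=
      List.isChain_iff_pairwise.2 (by simpa [List.pairwise_append, hI, hF] using hl)
    obtain ⟨w, hw, hlast, hsub⟩ := hchain.exists_isChain_cons_of_reflTransGen
    refine ⟨I :: w, hw, rfl, by rw [hlast, ← List.cons_append, List.getLast?_concat],
      fun v => hsub (List.mem_cons_of_mem I (List.mem_append_left _ (hcover v)))⟩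
end

section
/- Let (V,E) be a finite directed graph with distinguished vertices I, F ∈ V, I ≠ F, such that (1) every vertex of V is reachable from I, (2) F is reachable from every vertex of V, and (3) for all pairs of vertices v1, v2 ∈ V \ {I,F}, either v2 is reachable from v1 or v1 is reachable from v2. Then the transitive closure (V,E') contains a Hamiltonian path from I to F. -/
/-!
Reachability is a total preorder on the vertices other than `I` and `F`. Listing those
vertices in sorted order between `I` and `F` gives a list without repetitions in which
every vertex reaches all later ones; consecutive vertices are distinct, so the walk
joining them is nonempty.
-/

open Relation

theorem List.Pairwise.isChain_transGen {α : Type*} {r : α → α → Prop} {l : List α}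
    (hl : l.Pairwise (ReflTransGen r)) (hnd : l.Nodup) : l.IsChain (TransGen r) :=
  (hl.and hnd).isChain.imp fun _ _ ⟨hab, hne⟩ =>
    (reflTransGen_iff_eq_or_transGen.1 hab).resolve_left hne.symm

theorem Finset.exists_nodup_pairwise_of_total {α : Type*} (s : Finset α) {r : α → α → Prop}
    [IsTrans α r] (htot : ∀ a ∈ s, ∀ b ∈ s, r a b ∨ r b a) :
    ∃ l : List α, l.Nodup ∧ l.Pairwise r ∧ ∀ a, a ∈ l ↔ a ∈ s := by
  classical
  let rs : s → s → Prop := fun a b => r a b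
  have : Std.Total rs := ⟨fun a b => htot a a.2 b b.2⟩
  have : IsTrans s rs := ⟨fun _ _ _ => _root_.trans (r := r)⟩
  have hperm := List.perm_insertionSort rs s.attach.toList
  refine ⟨(s.attach.toList.insertionSort rs).map Subtype.val, ?_, ?_, fun a => ?_⟩
  · exact (hperm.nodup_iff.2 s.attach.nodup_toList).map Subtype.val_injective
  · exact (List.pairwise_insertionSort rs _).map _ fun _ _ h => h
  · simp [hperm.mem_iff]

/-- If in a finite directed graph `(V, E)` with `I ≠ F` every vertex is reachable from
`I`, `F` is reachable from every vertex, and any two vertices outside `{I, F}` are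
reachable one from the other in at least one direction, then the transitive closure
(edges given by nonempty walks, i.e. `Relation.TransGen E`) contains a Hamiltonian
path from `I` to `F`. -/
theorem transitive_closure_hamiltonian_path {V : Type*} [Fintype V] (E : V → V → Prop)
    (I F : V) (hIF : I ≠ F)
    (h1 : ∀ v : V, Relation.ReflTransGen E I v)
    (h2 : ∀ v : V, Relation.ReflTransGen E v F)
    (h3 : ∀ v1 v2 : V, v1 ≠ I → v1 ≠ F → v2 ≠ I → v2 ≠ F →
       Relation.ReflTransGen E v1 v2 ∨ Relation.ReflTransGen E v2 v1) :
    ∃ p : List V, p.Chain' (Relation.TransGen E) ∧ p.head? = some I ∧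
      p.getLast? = some F ∧ p.Nodup ∧ ∀ v : V, v ∈ p := by
  classical
  obtain ⟨l, hl_nodup, hl_pairwise, hl_mem⟩ :=
    ({I, F}ᶜ : Finset V).exists_nodup_pairwise_of_total (r := ReflTransGen E) fun a ha b hb => by
      simp only [Finset.mem_compl, Finset.mem_insert, Finset.mem_singleton, not_or] at ha hb
      exact h3 a b ha.1 ha.2 hb.1 hb.2
  have hI : I ∉ l := by simp [hl_mem]
  have hF : ∀ v ∈ l, v ≠ F := fun v hv => by simp_all
  have hpairwise : (I :: l ++ [F]).Pairwise (ReflTransGen E) := by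
    simp [List.pairwise_append, hl_pairwise, h1, h2]
  have hnodup : (I :: l ++ [F]).Nodup := by
    simpa [List.nodup_append, hl_nodup, hI, hIF] using hF
  refine ⟨I :: l ++ [F], hpairwise.isChain_transGen hnodup, rfl, by simp [List.getLast?_cons],
    hnodup, fun v => ?_⟩
  simp only [List.cons_append, List.mem_cons, List.mem_append, hl_mem, Finset.mem_compl,
    Finset.mem_insert, Finset.mem_singleton]
  tauto
end

section
/- Let (V,E) be a finite directed graph with distinguished vertices I, F ∈ V, I ≠ F. If (V,E) has a covering path from I to F, then the transitive closure (V,E') has a Hamiltonian path from I to F. -/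
/-!
In the transitive closure every vertex of a walk is joined to every later vertex, so every
sublist of the covering path is again a walk there. Keeping `I` first, `F` last and exactly one
copy of every other vertex of the covering path gives the Hamiltonian path.
-/

namespace List

variable {α : Type*}

theorem IsChain.pairwise_transGen {R : α → α → Prop} {l : List α} (h : l.IsChain R) :
    l.Pairwise (Relation.TransGen R) :=
  isChain_iff_pairwise.1 (h.imp fun _ _ => Relation.TransGen.single)

theorem IsChain.transGen_of_sublist {R : α → α → Prop} {l l' : List α} (h : l.IsChain R)
    (hl' : l' <+ l) : l'.IsChain (Relation.TransGen R) :=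
  (h.pairwise_transGen.sublist hl').isChain

theorem exists_eq_cons_append_singleton {l : List α} {a b : α} (hab : a ≠ b)
    (ha : l.head? = some a) (hb : l.getLast? = some b) : ∃ s, l = a :: s ++ [b] := by
  obtain ⟨t, rfl⟩ : ∃ t, l = a :: t := by
    cases l with
    | nil => simp at ha
    | cons c t => exact ⟨t, by simpa using ha⟩
  rcases eq_nil_or_concat t with rfl | ⟨s, c, rfl⟩
  · simp_all
  · simp only [concat_eq_append, ← cons_append, getLast?_concat, Option.some.injEq] at hb
    exact ⟨s, by rw [concat_eq_append, hb, cons_append]⟩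

theorem exists_nodup_sublist_cons_append_singleton [DecidableEq α] {a b : α} (hab : a ≠ b)
    (s : List α) :
    ∃ l, l <+ a :: s ++ [b] ∧ l.Nodup ∧ a :: s ++ [b] ⊆ l ∧
      l.head? = some a ∧ l.getLast? = some b := by
  set m := s.dedup.filter fun x => x ≠ a ∧ x ≠ b
  refine ⟨a :: m ++ [b], ?_, ?_, ?_, rfl, getLast?_concat⟩
  · exact ((filter_sublist.trans (dedup_sublist s)).append_right [b]).cons_cons a
  · simp [m, nodup_append, hab, (nodup_dedup s).filter]
  · intro x
    simp only [m, mem_append, mem_cons, mem_filter, mem_dedup, decide_eq_true_eq,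
      not_mem_nil, or_false]
    tauto

theorem exists_nodup_sublist_of_head?_getLast? [DecidableEq α] {l : List α} {a b : α}
    (hab : a ≠ b) (ha : l.head? = some a) (hb : l.getLast? = some b) :
    ∃ l', l' <+ l ∧ l'.Nodup ∧ l ⊆ l' ∧ l'.head? = some a ∧ l'.getLast? = some b := by
  obtain ⟨s, rfl⟩ := exists_eq_cons_append_singleton hab ha hb
  exact exists_nodup_sublist_cons_append_singleton hab s

end List

theorem covering_path_to_hamiltonian_path_general {V : Type*} (E : V → V → Prop)
    (I F : V) (hIF : I ≠ F)
    (hcov : ∃ p : List V, p.Chain' E ∧ p.head? = some I ∧ p.getLast? = some F ∧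
      ∀ v : V, v ∈ p) :
    ∃ q : List V, q.Chain' (Relation.TransGen E) ∧ q.head? = some I ∧
      q.getLast? = some F ∧ q.Nodup ∧ ∀ v : V, v ∈ q := by
  classical
  obtain ⟨p, hpE, hpI, hpF, hcover⟩ := hcov
  obtain ⟨q, hqp, hnodup, hpq, hqI, hqF⟩ :=
    List.exists_nodup_sublist_of_head?_getLast? hIF hpI hpF
  exact ⟨q, hpE.transGen_of_sublist hqp, hqI, hqF, hnodup, fun v => hpq (hcover v)⟩

/-- If a finite directed graph `(V, E)` with `I ≠ F` has a covering path from `I` to `F`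
(a walk starting at `I`, ending at `F`, visiting every vertex at least once), then its
transitive closure (edges given by nonempty walks, i.e. `Relation.TransGen E`) has a
Hamiltonian path from `I` to `F`. -/
theorem covering_path_to_hamiltonian_path {V : Type*} [Fintype V] (E : V → V → Prop)
    (I F : V) (hIF : I ≠ F)
    (hcov : ∃ p : List V, p.Chain' E ∧ p.head? = some I ∧ p.getLast? = some F ∧
      ∀ v : V, v ∈ p) :
    ∃ q : List V, q.Chain' (Relation.TransGen E) ∧ q.head? = some I ∧
      q.getLast? = some F ∧ q.Nodup ∧ ∀ v : V, v ∈ q :=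
  covering_path_to_hamiltonian_path_general E I F hIF hcov
end

section
/- Let (V,E,W) be a finite directed graph with edge weights W: E → ℕ, distinguished vertices I, F ∈ V, I ≠ F, and weighted transitive closure (V,E',w'). Every Hamiltonian path from I to F in (V,E',w') of total w'-weight L can be expanded into a covering path from I to F in (V,E) of total W-weight exactly L. -/
/-! Replace each edge `(u, v)` of the Hamiltonian path by a walk in `(V, E)` of weight exactly
`w'(u, v)`: some walk from `u` to `v` exists because `(u, v) ∈ E'`, so the infimum over `ℕ` is
attained. Consecutive walks share their endpoint, so splicing them gives a walk whose weight is
the sum of the `w'`-weights, and it visits every vertex because the Hamiltonian path does. -/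

/-- The weight of a walk (given as a list of visited vertices) is the sum of the
weights of its edges, counted with multiplicity. -/
def walkWeight {V : Type*} (W : V → V → ℕ) (p : List V) : ℕ :=
  ((p.zip p.tail).map fun q => W q.1 q.2).sum

/-- The weight `w'(u,v)` in the weighted transitive closure: the minimum weight of a
nonempty walk (a walk with at least one edge) from `u` to `v`. -/
noncomputable def closureWeight {V : Type*} (E : V → V → Prop) (W : V → V → ℕ) (u v : V) : ℕ :=
  sInf {n | ∃ r : List V, 2 ≤ r.length ∧ r.Chain' E ∧ r.head? = some u ∧
    r.getLast? = some v ∧ walkWeight W r = n}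

open Relation

section

variable {V : Type*} {E : V → V → Prop} (W : V → V → ℕ)

@[simp]
lemma walkWeight_singleton (a : V) : walkWeight W [a] = 0 := rfl

@[simp]
lemma walkWeight_cons_cons (a b : V) (l : List V) :
    walkWeight W (a :: b :: l) = W a b + walkWeight W (b :: l) := by
  simp [walkWeight]

lemma walkWeight_append_cons (l₁ : List V) (b : V) (l₂ : List V) :
    walkWeight W (l₁ ++ b :: l₂) = walkWeight W (l₁ ++ [b]) + walkWeight W (b :: l₂) := by
  induction l₁ with
  | nil => simp
  | cons x l ih => cases l <;> simp_all [Nat.add_assoc]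

lemma exists_isChain_cons_append_singleton_of_transGen {u v : V} (h : TransGen E u v) :
    ∃ l, (u :: l ++ [v]).IsChain E := by
  induction h with
  | single huv => exact ⟨[], List.isChain_pair.mpr huv⟩
  | @tail c d _ hcd ih =>
    obtain ⟨l, hl⟩ := ih
    refine ⟨l ++ [c], ?_⟩
    simpa using hl.append_overlap (l₂ := [c]) (l₃ := [d]) (List.isChain_pair.mpr hcd) (by simp)

lemma exists_eq_cons_append_singleton {r : List V} {u v : V} (hlen : 2 ≤ r.length)
    (hhead : r.head? = some u) (hlast : r.getLast? = some v) : ∃ l, r = u :: l ++ [v] := by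
  obtain _ | ⟨x, r⟩ := r
  · simp at hhead
  obtain rfl : x = u := by simpa using hhead
  obtain rfl | ⟨l, y, rfl⟩ := r.eq_nil_or_concat'
  · simp at hlen
  obtain rfl : y = v := Option.some.inj ((List.getLast?_concat (l := x :: l)).symm.trans hlast)
  exact ⟨l, rfl⟩

lemma exists_walk_weight_eq_closureWeight {u v : V} (h : TransGen E u v) :
    ∃ r : List V, 2 ≤ r.length ∧ r.IsChain E ∧ r.head? = some u ∧ r.getLast? = some v ∧
      walkWeight W r = closureWeight E W u v := by
  obtain ⟨l, hl⟩ := exists_isChain_cons_append_singleton_of_transGen h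
  exact Nat.sInf_mem (s := {n | ∃ r : List V, 2 ≤ r.length ∧ r.IsChain E ∧ r.head? = some u ∧
    r.getLast? = some v ∧ walkWeight W r = n})
    ⟨_, u :: l ++ [v], by simp, hl, rfl, List.getLast?_concat .., rfl⟩

lemma exists_cons_append_singleton_weight_eq_closureWeight {u v : V} (h : TransGen E u v) :
    ∃ l, (u :: l ++ [v]).IsChain E ∧ walkWeight W (u :: l ++ [v]) = closureWeight E W u v := by
  obtain ⟨r, hlen, hchain, hhead, hlast, hweight⟩ := exists_walk_weight_eq_closureWeight W h
  obtain ⟨l, rfl⟩ := exists_eq_cons_append_singleton hlen hhead hlast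
  exact ⟨l, hchain, hweight⟩

lemma exists_expansion_of_isChain_transGen (a : V) (l : List V)
    (hchain : (a :: l).IsChain (TransGen E)) :
    ∃ p, (a :: p).IsChain E ∧ (a :: p).getLast? = (a :: l).getLast? ∧ l.Sublist p ∧
      walkWeight W (a :: p) = walkWeight (closureWeight E W) (a :: l) := by
  induction l generalizing a with
  | nil => exact ⟨[], List.isChain_singleton a, rfl, .slnil, rfl⟩
  | cons b l ih =>
    obtain ⟨hab, hbl⟩ := List.isChain_cons_cons.mp hchain
    obtain ⟨p, hp, hlast, hsub, hweight⟩ := ih b hbl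
    obtain ⟨m, hm, hmweight⟩ := exists_cons_append_singleton_weight_eq_closureWeight W hab
    refine ⟨m ++ b :: p, ?_, ?_, (hsub.cons_cons b).trans (List.sublist_append_right m _), ?_⟩
    · simpa using hm.append_overlap (l₂ := [b]) (l₃ := p) hp (by simp)
    · simpa [List.getLast?_cons] using hlast
    · rw [← List.cons_append, walkWeight_append_cons, hmweight, hweight, walkWeight_cons_cons]

end

theorem hamiltonian_path_expands_to_covering_path_general {V : Type*}
    (E : V → V → Prop) (W : V → V → ℕ) (I F : V)
    (q : List V) (L : ℕ)
    (hchain : q.Chain' (Relation.TransGen E)) (hhead : q.head? = some I)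
    (hlast : q.getLast? = some F) (hcover : ∀ v : V, v ∈ q)
    (hweight : walkWeight (closureWeight E W) q = L) :
    ∃ p : List V, p.Chain' E ∧ p.head? = some I ∧ p.getLast? = some F ∧
      (∀ v : V, v ∈ p) ∧ q.Sublist p ∧ walkWeight W p = L := by
  obtain ⟨l, rfl⟩ : ∃ l, q = I :: l := List.head?_eq_some_iff.mp hhead
  obtain ⟨p, hp, hplast, hsub, hpweight⟩ := exists_expansion_of_isChain_transGen W I l hchain
  exact ⟨I :: p, hp, rfl, hplast.trans hlast, fun v => (hsub.cons_cons I).subset (hcover v),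
    hsub.cons_cons I, hpweight.trans hweight⟩

/-- Every Hamiltonian path `q` from `I` to `F` in the weighted transitive closure
`(V, E', w')` of total `w'`-weight `L` can be expanded (the expansion contains `q` as
a subsequence) into a covering path from `I` to `F` in `(V, E)` of total `W`-weight
exactly `L`. -/
theorem hamiltonian_path_expands_to_covering_path {V : Type*} [Fintype V]
    (E : V → V → Prop) (W : V → V → ℕ) (I F : V) (hIF : I ≠ F)
    (q : List V) (L : ℕ)
    (hchain : q.Chain' (Relation.TransGen E)) (hhead : q.head? = some I)
    (hlast : q.getLast? = some F) (hnodup : q.Nodup) (hcover : ∀ v : V, v ∈ q)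
    (hweight : walkWeight (closureWeight E W) q = L) :
    ∃ p : List V, p.Chain' E ∧ p.head? = some I ∧ p.getLast? = some F ∧
      (∀ v : V, v ∈ p) ∧ q.Sublist p ∧ walkWeight W p = L :=
  hamiltonian_path_expands_to_covering_path_general E W I F q L hchain hhead hlast hcover hweight
end

section
/- Let T ⊆ Σ×Σ be a transition relation on a finite set of states Σ, let s0, t ∈ Σ, and let a_1, …, a_m ∈ Σ be pairwise distinct states. Every execution that starts at s0, ends at t, and visits each of a_1, …, a_m has length at least the minimum, over all permutations σ of {1,…,m} for which all the distances involved are defined, of d(s0, a_{σ(1)}) + Σ_{i=1}^{m-1} d(a_{σ(i)}, a_{σ(i+1)}) + d(a_{σ(m)}, t). -/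
/-!
Sort the states `a i` by the position of their first occurrence in `p`. Cutting `p` at these
positions gives executions `s0 ⇝ a (σ 0) ⇝ … ⇝ a (σ m) ⇝ t`, which witness the required
reachabilities and bound each distance by the length of their segment; the segment lengths add
up to the length of `p`.
-/

/-- The minimal length (number of transitions) of an execution from `s` to `t`;
meaningful only when `t` is reachable from `s`. An execution is a nonempty list of
states whose consecutive elements are related by `T`; a list of length `n + 1`
represents an execution of length `n`. -/
noncomputable def execDist {S : Type*} (T : S → S → Prop) (s t : S) : ℕ :=
  sInf {n | ∃ p : List S, p.Chain' T ∧ p.head? = some s ∧ p.getLast? = some t ∧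
    p.length = n + 1}

theorem Fin.sum_add_le_of_forall_add_le {M : Type*} [AddCommMonoid M] [PartialOrder M]
    [IsOrderedAddMonoid M] {m : ℕ} (b : Fin m → M) (g : Fin (m + 1) → M)
    (h : ∀ i, b i + g i.castSucc ≤ g i.succ) : ∑ i, b i + g 0 ≤ g (Fin.last m) := by
  induction m with
  | zero => simp
  | succ m ih =>
    calc ∑ i, b i + g 0
        = (∑ i : Fin m, b i.castSucc + g (0 : Fin (m + 1)).castSucc) + b (Fin.last m) := by
          rw [Fin.sum_univ_castSucc, Fin.castSucc_zero, add_right_comm]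
      _ ≤ g (Fin.last m).castSucc + b (Fin.last m) := by
          gcongr
          exact ih _ (g ∘ Fin.castSucc) fun i => by simpa using h i.castSucc
      _ ≤ g (Fin.last (m + 1)) := Fin.succ_last m ▸ add_comm (b _) _ ▸ h (Fin.last m)

section Tour

variable {S : Type*} {T : S → S → Prop}

def TourReachable (T : S → S → Prop) (s t : S) {m : ℕ} (b : Fin (m + 1) → S) : Prop :=
  Relation.ReflTransGen T s (b 0) ∧
    (∀ i : Fin m, Relation.ReflTransGen T (b i.castSucc) (b i.succ)) ∧
    Relation.ReflTransGen T (b (Fin.last m)) t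

noncomputable def tourLength (T : S → S → Prop) (s t : S) {m : ℕ} (b : Fin (m + 1) → S) : ℕ :=
  execDist T s (b 0) + (∑ i : Fin m, execDist T (b i.castSucc) (b i.succ)) +
    execDist T (b (Fin.last m)) t

theorem reflTransGen_of_isChain {q : List S} {s t : S} (hq : q.IsChain T)
    (hs : q.head? = some s) (ht : q.getLast? = some t) : Relation.ReflTransGen T s t := by
  obtain ⟨r, rfl⟩ := List.head?_eq_some_iff.1 hs
  refine List.relationReflTransGen_of_exists_isChain_cons r hq (Option.some_injective _ ?_)
  rw [← List.getLast?_eq_getLast_of_ne_nil, ht]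

theorem execDist_le_of_isChain {q : List S} {s t : S} (hq : q.IsChain T)
    (hs : q.head? = some s) (ht : q.getLast? = some t) : execDist T s t ≤ q.length - 1 := by
  obtain ⟨r, rfl⟩ := List.head?_eq_some_iff.1 hs
  exact Nat.sInf_le ⟨_, hq, hs, ht, rfl⟩

theorem reflTransGen_and_execDist_le_of_getElem? {p : List S} (hp : p.IsChain T) {i j : ℕ}
    {x y : S} (hij : i ≤ j) (hx : p[i]? = some x) (hy : p[j]? = some y) :
    Relation.ReflTransGen T x y ∧ execDist T x y ≤ j - i := by
  set q := (p.drop i).take (j - i + 1)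
  have hq : q.IsChain T := (hp.drop i).take _
  have hqx : q.head? = some x := by
    simpa [q, List.head?_eq_getElem?, List.getElem?_take, List.getElem?_drop] using hx
  have hqy : q.getLast? = some y := by
    have hj : j < p.length := (List.getElem?_eq_some_iff.1 hy).1
    have hlen : q.length = j - i + 1 := by
      simp only [q, List.length_take, List.length_drop]; omega
    rw [List.getLast?_eq_getElem?, hlen, List.getElem?_take, List.getElem?_drop]
    simpa [show i + (j - i) = j by omega] using hy
  refine ⟨reflTransGen_of_isChain hq hqx hqy, (execDist_le_of_isChain hq hqx hqy).trans ?_⟩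
  simp [q]

theorem tourReachable_and_tourLength_le_of_isChain {p : List S} {s t : S} (hp : p.IsChain T)
    (hs : p.head? = some s) (ht : p.getLast? = some t) {m : ℕ} {b : Fin (m + 1) → S}
    {g : Fin (m + 1) → ℕ} (hg : Monotone g) (hb : ∀ i, p[g i]? = some (b i)) :
    TourReachable T s t b ∧ tourLength T s t b ≤ p.length - 1 := by
  have hs' : p[0]? = some s := List.head?_eq_getElem? ▸ hs
  have ht' : p[p.length - 1]? = some t := List.getLast?_eq_getElem? ▸ ht
  have hg_last : g (Fin.last m) ≤ p.length - 1 := by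
    have := (List.getElem?_eq_some_iff.1 (hb (Fin.last m))).1
    omega
  obtain ⟨reach_first, dist_first⟩ :=
    reflTransGen_and_execDist_le_of_getElem? hp (Nat.zero_le _) hs' (hb 0)
  obtain ⟨reach_last, dist_last⟩ :=
    reflTransGen_and_execDist_le_of_getElem? hp hg_last (hb (Fin.last m)) ht'
  have mid (i : Fin m) := reflTransGen_and_execDist_le_of_getElem? hp
    (hg i.castSucc_le_succ) (hb i.castSucc) (hb i.succ)
  refine ⟨⟨reach_first, fun i => (mid i).1, reach_last⟩, ?_⟩
  have hsum := Fin.sum_add_le_of_forall_add_le _ g fun i =>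
    Nat.add_le_of_le_sub (hg i.castSucc_le_succ) (mid i).2
  unfold tourLength
  omega

end Tour

theorem execution_length_lower_bound_general {S : Type*} (T : S → S → Prop)
    (s0 t : S) (m : ℕ) (a : Fin (m + 1) → S)
    (p : List S) (hchain : p.Chain' T) (hhead : p.head? = some s0)
    (hlast : p.getLast? = some t) (hvisit : ∀ i : Fin (m + 1), a i ∈ p) :
    sInf {c | ∃ σ : Equiv.Perm (Fin (m + 1)),
        (Relation.ReflTransGen T s0 (a (σ 0)) ∧
         (∀ i : Fin m, Relation.ReflTransGen T (a (σ i.castSucc)) (a (σ i.succ))) ∧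
         Relation.ReflTransGen T (a (σ (Fin.last m))) t) ∧
        execDist T s0 (a (σ 0)) +
          (∑ i : Fin m, execDist T (a (σ i.castSucc)) (a (σ i.succ))) +
          execDist T (a (σ (Fin.last m))) t = c} ≤ p.length - 1 := by
  classical
  let firstIdx (i : Fin (m + 1)) : ℕ := p.idxOf (a i)
  let σ := Tuple.sort firstIdx
  obtain ⟨hreach, hlength⟩ := tourReachable_and_tourLength_le_of_isChain hchain hhead hlast
    (b := a ∘ σ) (Tuple.monotone_sort firstIdx) fun i => List.getElem?_idxOf (hvisit (σ i))
  exact le_trans (Nat.sInf_le ⟨σ, hreach, rfl⟩) hlength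

/-- Every execution from `s0` to `t` visiting each of the pairwise distinct states
`a 0, …, a m` has length at least the minimum, over all permutations `σ` of the
indices for which all the involved distances are defined (i.e. the corresponding
reachabilities hold), of
`d(s0, a (σ 0)) + ∑ d(a (σ i), a (σ (i+1))) + d(a (σ m), t)`. -/
theorem execution_length_lower_bound {S : Type*} [Fintype S] (T : S → S → Prop)
    (s0 t : S) (m : ℕ) (a : Fin (m + 1) → S) (hinj : Function.Injective a)
    (p : List S) (hchain : p.Chain' T) (hhead : p.head? = some s0)
    (hlast : p.getLast? = some t) (hvisit : ∀ i : Fin (m + 1), a i ∈ p) :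
    sInf {c | ∃ σ : Equiv.Perm (Fin (m + 1)),
        (Relation.ReflTransGen T s0 (a (σ 0)) ∧
         (∀ i : Fin m, Relation.ReflTransGen T (a (σ i.castSucc)) (a (σ i.succ))) ∧
         Relation.ReflTransGen T (a (σ (Fin.last m))) t) ∧
        execDist T s0 (a (σ 0)) +
          (∑ i : Fin m, execDist T (a (σ i.castSucc)) (a (σ i.succ))) +
          execDist T (a (σ (Fin.last m))) t = c} ≤ p.length - 1 :=
  execution_length_lower_bound_general T s0 t m a p hchain hhead hlast hvisit
end

section
/- Let T ⊆ Σ×Σ be a transition relation on a finite set of states Σ, let s0, t ∈ Σ, and let a_1, …, a_m ∈ Σ be pairwise distinct states. If there exists an execution from s0 to t that visits each of a_1, …, a_m, then the minimum length of such an execution equals the minimum, over all permutations σ of {1,…,m} for which all the distances involved are defined, of d(s0, a_{σ(1)}) + Σ_{i=1}^{m-1} d(a_{σ(i)}, a_{σ(i+1)}) + d(a_{σ(m)}, t). -/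
namespace List

variable {α : Type*} {R : α → α → Prop}

lemma IsChain.append_of_getLast? {p q : List α} {u : α} (hp : p.IsChain R)
    (hu : p.getLast? = some u) (hq : (u :: q).IsChain R) : (p ++ q).IsChain R := by
  obtain ⟨p, rfl⟩ := getLast?_eq_some_iff.mp hu
  simpa using hp.append_overlap (l₃ := q) hq (cons_ne_nil _ _)

lemma getLast?_ofFn {m : ℕ} (b : Fin (m + 1) → α) :
    (ofFn b).getLast? = some (b (Fin.last m)) := by
  rw [getLast?_eq_some_getLast (by simp), getLast_ofFn]
  rfl

lemma isChain_ofFn_iff {m : ℕ} {b : Fin (m + 1) → α} :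
    (ofFn b).IsChain R ↔ ∀ i : Fin m, R (b i.castSucc) (b i.succ) := by
  rw [isChain_ofFn]
  exact ⟨fun h i => h i (by omega), fun h i _ => h ⟨i, by omega⟩⟩

lemma isChain_cons_ofFn_append_singleton_iff {m : ℕ} {x y : α} {b : Fin (m + 1) → α} :
    (x :: (ofFn b ++ [y])).IsChain R ↔
      R x (b 0) ∧ (∀ i : Fin m, R (b i.castSucc) (b i.succ)) ∧ R (b (Fin.last m)) y := by
  rw [← cons_append, isChain_append, isChain_cons, ← isChain_ofFn_iff]
  have hhead : (ofFn b).head? = some (b 0) := by rw [ofFn_succ]; rfl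
  simp [hhead, getLast?_ofFn, -ofFn_succ, getLast?_cons, and_assoc]

lemma exists_perm_ofFn_comp_eq {n : ℕ} {a : Fin n → α} (ha : Function.Injective a)
    {l : List α} (hl : l ~ ofFn a) : ∃ σ : Equiv.Perm (Fin n), ofFn (a ∘ σ) = l := by
  have hlen : l.length = n := by simpa using hl.length_eq
  have hmem (i : Fin n) : ∃ j, a j = l[i.val] := mem_ofFn.mp (hl.subset (getElem_mem _))
  choose τ hτ using hmem
  have hτ_inj : Function.Injective τ := fun i j hij => Fin.ext <|
    ((hl.nodup_iff.mpr (nodup_ofFn.mpr ha)).getElem_inj_iff).mp (by rw [← hτ, ← hτ, hij])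
  refine ⟨Equiv.ofBijective τ (Finite.injective_iff_bijective.mp hτ_inj), ?_⟩
  exact ext_getElem (by simp [hlen]) fun i _ _ => by simp [hτ]

end List

section

open List Relation

variable {S : Type*} {T : S → S → Prop} {s t : S}

lemma execDist_le_of_isChain_s7 {p : List S} {n : ℕ} (hp : p.IsChain T) (hs : p.head? = some s)
    (ht : p.getLast? = some t) (hn : p.length = n + 1) : execDist T s t ≤ n :=
  Nat.sInf_le ⟨p, hp, hs, ht, hn⟩

lemma exists_isChain_length_execDist (h : ReflTransGen T s t) :
    ∃ p : List S, p.IsChain T ∧ p.head? = some s ∧ p.getLast? = some t ∧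
      p.length = execDist T s t + 1 := by
  obtain ⟨l, hl, hlast⟩ := exists_isChain_cons_of_relationReflTransGen h
  have hne : {n | ∃ p : List S, p.IsChain T ∧ p.head? = some s ∧ p.getLast? = some t ∧
      p.length = n + 1}.Nonempty :=
    ⟨l.length, s :: l, hl, rfl, by simp [getLast?_eq_some_getLast, hlast], rfl⟩
  exact Nat.sInf_mem hne

lemma execDist_self (s : S) : execDist T s s = 0 :=
  Nat.le_zero.mp (execDist_le_of_isChain_s7 (p := [s]) (isChain_singleton s) rfl rfl rfl)

lemma execDist_le_one (h : T s t) : execDist T s t ≤ 1 :=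
  execDist_le_of_isChain_s7 (p := [s, t]) (isChain_pair.mpr h) rfl rfl rfl

variable (T) in
noncomputable def waypointDist : List S → ℕ
  | x :: y :: l => execDist T x y + waypointDist (y :: l)
  | _ => 0

@[simp] lemma waypointDist_singleton (x : S) : waypointDist T [x] = 0 := rfl

@[simp] lemma waypointDist_cons_cons (x y : S) (l : List S) :
    waypointDist T (x :: y :: l) = execDist T x y + waypointDist T (y :: l) := rfl

lemma waypointDist_concat {l : List S} {x : S} (hx : l.getLast? = some x) (y : S) :
    waypointDist T (l ++ [y]) = waypointDist T l + execDist T x y := by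
  induction l with
  | nil => simp at hx
  | cons z l ih =>
    cases l with
    | nil => simp_all
    | cons w l =>
      simp only [cons_append, waypointDist_cons_cons] at ih ⊢
      rw [ih (by simpa [getLast?_cons] using hx)]
      ring

lemma waypointDist_cons_ofFn {m : ℕ} (x : S) (b : Fin (m + 1) → S) :
    waypointDist T (x :: ofFn b) = execDist T x (b 0) + waypointDist T (ofFn b) := by
  rw [ofFn_succ]
  rfl

lemma waypointDist_ofFn {m : ℕ} (b : Fin (m + 1) → S) :
    waypointDist T (ofFn b) = ∑ i : Fin m, execDist T (b i.castSucc) (b i.succ) := by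
  induction m with
  | zero => simp
  | succ m ih =>
    rw [ofFn_succ, waypointDist_cons_ofFn, ih, Fin.sum_univ_succ]
    rfl

lemma waypointDist_cons_ofFn_append_singleton {m : ℕ} (x y : S) (b : Fin (m + 1) → S) :
    waypointDist T (x :: (ofFn b ++ [y])) = execDist T x (b 0) +
      ∑ i : Fin m, execDist T (b i.castSucc) (b i.succ) + execDist T (b (Fin.last m)) y := by
  rw [← cons_append,
    waypointDist_concat (x := b (Fin.last m)) (by rw [getLast?_cons, getLast?_ofFn]; rfl),
    waypointDist_cons_ofFn, waypointDist_ofFn]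

lemma waypointDist_le_length_of_isChain {p : List S} (hp : p.IsChain T) :
    waypointDist T p ≤ p.length - 1 := by
  induction p with
  | nil => exact Nat.zero_le _
  | cons x l ih =>
    cases l with
    | nil => simp
    | cons y l =>
      rw [isChain_cons_cons] at hp
      have := execDist_le_one hp.1
      have := ih hp.2
      simp only [waypointDist_cons_cons, length_cons] at *
      omega

lemma exists_isChain_length_waypointDist {w : List S} (hw : w.IsChain (ReflTransGen T))
    (hne : w ≠ []) : ∃ p : List S, p.IsChain T ∧ p.head? = w.head? ∧
      p.getLast? = w.getLast? ∧ w ⊆ p ∧ p.length = waypointDist T w + 1 := by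
  induction w with
  | nil => exact absurd rfl hne
  | cons x w ih =>
    cases w with
    | nil => exact ⟨[x], isChain_singleton x, rfl, rfl, Subset.refl _, rfl⟩
    | cons y w =>
      rw [isChain_cons_cons] at hw
      obtain ⟨q, hq, hqy, hql, hwq, hqlen⟩ := ih hw.2 (cons_ne_nil _ _)
      obtain ⟨q, rfl⟩ := head?_eq_some_iff.mp hqy
      obtain ⟨r, hr, hrx, hry, hrlen⟩ := exists_isChain_length_execDist hw.1
      refine ⟨r ++ q, hr.append_of_getLast? hry hq, by simp [head?_append, hrx],
        by simp [getLast?_append, hry, getLast?_cons, ← hql], ?_,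
        by simp [hrlen] at hqlen ⊢; omega⟩
      intro z hz
      rcases mem_cons.mp hz with rfl | hz
      · exact mem_append_left _ (mem_of_mem_head? hrx)
      rcases mem_cons.mp (hwq hz) with rfl | hz
      · exact mem_append_left _ (mem_of_mem_getLast? hry)
      · exact mem_append_right _ hz

lemma execDist_le_waypointDist {w : List S} (hw : w.IsChain (ReflTransGen T))
    (hs : w.head? = some s) (ht : w.getLast? = some t) : execDist T s t ≤ waypointDist T w := by
  obtain ⟨p, hp, hps, hpt, -, hlen⟩ :=
    exists_isChain_length_waypointDist hw (by rintro rfl; simp at hs)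
  exact execDist_le_of_isChain_s7 hp (hps.trans hs) (hpt.trans ht) hlen

lemma execDist_triangle {u : S} (hsu : ReflTransGen T s u) (hut : ReflTransGen T u t) :
    execDist T s t ≤ execDist T s u + execDist T u t := by
  simpa using execDist_le_waypointDist (w := [s, u, t])
    (by simp [isChain_cons_cons, hsu, hut]) rfl rfl

lemma waypointDist_cons_le_cons_cons {x y : S} {l : List S} (hxy : ReflTransGen T x y)
    (hy : ∀ z ∈ l.head?, ReflTransGen T y z) :
    waypointDist T (x :: l) ≤ waypointDist T (x :: y :: l) := by
  cases l with
  | nil => simp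
  | cons z l =>
    have := execDist_triangle hxy (hy z rfl)
    simp only [waypointDist_cons_cons]
    omega

lemma waypointDist_cons_le_of_sublist {l₁ l₂ : List S} (h : l₁ <+ l₂) {x : S}
    (hl₂ : (x :: l₂).Pairwise (ReflTransGen T)) :
    waypointDist T (x :: l₁) ≤ waypointDist T (x :: l₂) := by
  induction h generalizing x with
  | slnil => rfl
  | @cons l₁ l₂ y _ ih =>
    obtain ⟨hx, hyl₂⟩ := pairwise_cons.mp hl₂
    calc waypointDist T (x :: l₁)
        ≤ waypointDist T (x :: l₂) := ih (hl₂.sublist ((sublist_cons_self y l₂).cons_cons x))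
      _ ≤ waypointDist T (x :: y :: l₂) :=
        waypointDist_cons_le_cons_cons (hx y mem_cons_self)
          fun z hz => (pairwise_cons.mp hyl₂).1 z (mem_of_mem_head? hz)
  | cons_cons y _ ih =>
    simp only [waypointDist_cons_cons]
    exact Nat.add_le_add_left (ih (pairwise_cons.mp hl₂).2) _

lemma pairwise_reflTransGen_cons_append_singleton {p : List S} (hp : p.IsChain T)
    (hs : p.head? = some s) (ht : p.getLast? = some t) :
    (s :: (p ++ [t])).Pairwise (ReflTransGen T) := by
  refine IsChain.pairwise (IsChain.cons ?_ ?_)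
  · exact (hp.imp fun _ _ => ReflTransGen.single).append (isChain_singleton t)
      (by simp [ht, ReflTransGen.refl])
  · simp [head?_append, hs, ReflTransGen.refl]

lemma waypointDist_cons_append_singleton {p : List S} (hs : p.head? = some s)
    (ht : p.getLast? = some t) : waypointDist T (s :: (p ++ [t])) = waypointDist T p := by
  obtain ⟨p, rfl⟩ := head?_eq_some_iff.mp hs
  rw [cons_append, waypointDist_cons_cons, execDist_self, zero_add, ← cons_append,
    waypointDist_concat ht, execDist_self, add_zero]

lemma exists_perm_waypointDist_le_of_isChain {p : List S} (hp : p.IsChain T)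
    (hs : p.head? = some s) (ht : p.getLast? = some t) {n : ℕ} {a : Fin n → S}
    (ha : Function.Injective a) (hmem : ∀ i, a i ∈ p) :
    ∃ σ : Equiv.Perm (Fin n), (s :: (ofFn (a ∘ σ) ++ [t])).IsChain (ReflTransGen T) ∧
      waypointDist T (s :: (ofFn (a ∘ σ) ++ [t])) ≤ p.length - 1 := by
  obtain ⟨l, hperm, hsub⟩ := (nodup_ofFn.mpr ha).subperm
    fun x hx => by obtain ⟨i, rfl⟩ := mem_ofFn.mp hx; exact hmem i
  obtain ⟨σ, rfl⟩ := exists_perm_ofFn_comp_eq ha hperm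
  -- Padding `p` with its own endpoints keeps the waypoints a sublist even when some `a i` equals
  -- `s` or `t` and occurs in `p` only as its first or last state.
  have hsub' : ofFn (a ∘ σ) ++ [t] <+ p ++ [t] := hsub.append (Sublist.refl _)
  have hpw := pairwise_reflTransGen_cons_append_singleton hp hs ht
  refine ⟨σ, (hpw.sublist (hsub'.cons_cons s)).isChain, ?_⟩
  calc waypointDist T (s :: (ofFn (a ∘ σ) ++ [t]))
      ≤ waypointDist T (s :: (p ++ [t])) := waypointDist_cons_le_of_sublist hsub' hpw
    _ = waypointDist T p := waypointDist_cons_append_singleton hs ht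
    _ ≤ p.length - 1 := waypointDist_le_length_of_isChain hp

end

theorem min_execution_length_eq_general {S : Type*} (T : S → S → Prop)
    (s0 t : S) (m : ℕ) (a : Fin (m + 1) → S) (hinj : Function.Injective a) :
    sInf {n | ∃ p : List S, p.Chain' T ∧ p.head? = some s0 ∧ p.getLast? = some t ∧
        (∀ i : Fin (m + 1), a i ∈ p) ∧ p.length = n + 1} =
    sInf {c | ∃ σ : Equiv.Perm (Fin (m + 1)),
        (Relation.ReflTransGen T s0 (a (σ 0)) ∧
         (∀ i : Fin m, Relation.ReflTransGen T (a (σ i.castSucc)) (a (σ i.succ))) ∧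
         Relation.ReflTransGen T (a (σ (Fin.last m))) t) ∧
        execDist T s0 (a (σ 0)) +
          (∑ i : Fin m, execDist T (a (σ i.castSucc)) (a (σ i.succ))) +
          execDist T (a (σ (Fin.last m))) t = c} := by
  refine csInf_eq_csInf_of_forall_exists_le ?_ ?_
  · rintro n ⟨p, hp, hs, ht, hmem, hn⟩
    obtain ⟨σ, hreach, hle⟩ := exists_perm_waypointDist_le_of_isChain hp hs ht hinj hmem
    rw [List.isChain_cons_ofFn_append_singleton_iff] at hreach
    rw [waypointDist_cons_ofFn_append_singleton] at hle
    exact ⟨_, ⟨σ, hreach, rfl⟩, by simpa [hn] using hle⟩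
  · rintro c ⟨σ, hreach, rfl⟩
    obtain ⟨p, hp, hs, ht, hsub, hlen⟩ := exists_isChain_length_waypointDist
      (List.isChain_cons_ofFn_append_singleton_iff (b := a ∘ σ) |>.mpr hreach)
      (List.cons_ne_nil _ _)
    refine ⟨_, ⟨p, hp, hs, by simpa [List.getLast?_cons] using ht, fun i => hsub ?_, ?_⟩, le_rfl⟩
    · exact List.mem_cons_of_mem _
        (List.mem_append_left _ (List.mem_ofFn.mpr ⟨σ.symm i, by simp⟩))
    · rw [hlen, waypointDist_cons_ofFn_append_singleton]
      rfl

/-- If some execution from `s0` to `t` visits each of the pairwise distinct states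
`a 0, …, a m`, then the minimum length of such an execution equals the minimum, over
all permutations `σ` of the indices for which all the involved distances are defined
(i.e. the corresponding reachabilities hold), of
`d(s0, a (σ 0)) + ∑ d(a (σ i), a (σ (i+1))) + d(a (σ m), t)`. -/
theorem min_execution_length_eq {S : Type*} [Fintype S] (T : S → S → Prop)
    (s0 t : S) (m : ℕ) (a : Fin (m + 1) → S) (hinj : Function.Injective a)
    (hex : ∃ p : List S, p.Chain' T ∧ p.head? = some s0 ∧ p.getLast? = some t ∧
      ∀ i : Fin (m + 1), a i ∈ p) :
    sInf {n | ∃ p : List S, p.Chain' T ∧ p.head? = some s0 ∧ p.getLast? = some t ∧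
        (∀ i : Fin (m + 1), a i ∈ p) ∧ p.length = n + 1} =
    sInf {c | ∃ σ : Equiv.Perm (Fin (m + 1)),
        (Relation.ReflTransGen T s0 (a (σ 0)) ∧
         (∀ i : Fin m, Relation.ReflTransGen T (a (σ i.castSucc)) (a (σ i.succ))) ∧
         Relation.ReflTransGen T (a (σ (Fin.last m))) t) ∧
        execDist T s0 (a (σ 0)) +
          (∑ i : Fin m, execDist T (a (σ i.castSucc)) (a (σ i.succ))) +
          execDist T (a (σ (Fin.last m))) t = c} :=
  min_execution_length_eq_general T s0 t m a hinj
end
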